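/- Let A be a closed densely defined operator on a Hilbert space H and B a bounded operator on H such that B A ⊆ A B and B* A ⊆ A B*. Write the polar decomposition A = U |A| with U a partial isometry and |A| = (A*A)^{1/2}. Then B commutes with U and B commutes with (1 + |A|)^{-1}. -/

import Mathlib

/-!
Write `R = (1 + |A|)⁻¹` and `S = (1 + |A|²)⁻¹`. Since `⟪|A| x, |A| y⟫ = ⟪A x, A y⟫`, the two
inclusions give `⟪|A| B x, |A| y⟫ = ⟪|A| x, |A| B* y⟫`; testing `B S u` against
`v = S v + |A|² S v` turns this into `B S = S B`. As the spectrum of `R` lies in `[0, 1]`, `R` is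
a continuous function of `S`, so `B` (and likewise `B*`) commutes with `R`, hence
`B |A| ⊆ |A| B`. Then `B U = U B` on the range of `|A|` by `A = U |A|`, and on its orthogonal
complement because `U` vanishes there and `B` preserves it.
-/

open ContinuousLinearMap

noncomputable section

variable {H : Type*} [NormedAddCommGroup H] [InnerProductSpace ℂ H] [CompleteSpace H]

/-- The data of the polar decomposition `A = U ∘ Hm` of a closed densely defined operator `A`:
`Hm = |A| = (A*A)^(1/2)` is a positive self-adjoint operator with the same domain as `A`, `U` is
a partial isometry whose initial space is the closure of the range of `Hm` (so that the
decomposition is the canonical one), and `R = (1 + |A|)⁻¹` is the bounded resolvent. -/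
structure PolarData (A : H →ₗ.[ℂ] H) where
  U : H →L[ℂ] H
  Hm : H →ₗ.[ℂ] H
  R : H →L[ℂ] H
  domain_eq : Hm.domain = A.domain
  factor : ∀ (x : H) (hx : x ∈ Hm.domain) (hx' : x ∈ A.domain),
    A ⟨x, hx'⟩ = U (Hm ⟨x, hx⟩)
  selfAdjoint : Hm.adjoint = Hm
  positive : ∀ (x : H) (hx : x ∈ Hm.domain), 0 ≤ (inner ℂ (Hm ⟨x, hx⟩) x : ℂ).re
  partialIsometry : U ∘L (adjoint U) ∘L U = U
  resolvent_left : ∀ (x : H) (hx : x ∈ Hm.domain), R (x + Hm ⟨x, hx⟩) = x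
  resolvent_right : ∀ y : H, ∃ hy : R y ∈ Hm.domain, R y + Hm ⟨R y, hy⟩ = y
  initial : ∀ (x : H) (hx : x ∈ Hm.domain), (adjoint U) (U (Hm ⟨x, hx⟩)) = Hm ⟨x, hx⟩
  kernel : ∀ y : H,
    (∀ (x : H) (hx : x ∈ Hm.domain), (inner ℂ y (Hm ⟨x, hx⟩) : ℂ) = 0) → U y = 0

open scoped InnerProductSpace

/-- `B A ⊆ A B`. -/
def ContinuousLinearMap.CommutesWithPMap {R E : Type*} [Ring R] [AddCommGroup E] [Module R E]
    [TopologicalSpace E] (B : E →L[R] E) (A : E →ₗ.[R] E) : Prop :=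
  ∀ (ξ : E) (hξ : ξ ∈ A.domain), ∃ h : B ξ ∈ A.domain, B (A ⟨ξ, hξ⟩) = A ⟨B ξ, h⟩

theorem ContinuousLinearMap.eq_zero_of_orthogonal_decomposition {𝕜 E F : Type*} [RCLike 𝕜]
    [NormedAddCommGroup E] [InnerProductSpace 𝕜 E] [CompleteSpace E] [NormedAddCommGroup F]
    [Module 𝕜 F] {K : Submodule 𝕜 E} (T : E →L[𝕜] F)
    (hK : ∀ x ∈ K, T x = 0) (hK' : ∀ x ∈ Kᗮ, T x = 0) : T = 0 := by
  have hK'' : Kᗮᗮ ≤ T.ker := by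
    rw [Submodule.orthogonal_orthogonal_eq_closure]
    exact K.topologicalClosure_minimal hK T.isClosed_ker
  ext x
  have hx : x ∈ Kᗮ ⊔ Kᗮᗮ := by
    rw [Submodule.sup_orthogonal_of_hasOrthogonalProjection]; trivial
  exact sup_le (hK' : Kᗮ ≤ T.ker) hK'' hx

namespace PolarData

variable {A : H →ₗ.[ℂ] H} (pd : PolarData A)

lemma sq_add_one_sub_sq_pos (t : ℝ) : 0 < t ^ 2 + (1 - t) ^ 2 := by
  nlinarith [sq_nonneg (2 * t - 1)]

/-- If `t = (1 + h)⁻¹` then `toSqResolvent t = (1 + h²)⁻¹`. -/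
def toSqResolvent (t : ℝ) : ℝ := t ^ 2 / (t ^ 2 + (1 - t) ^ 2)

def ofSqResolvent (s : ℝ) : ℝ := √s / (√s + √(1 - s))

lemma continuous_toSqResolvent : Continuous toSqResolvent :=
  Continuous.div (by fun_prop) (by fun_prop) fun t => (sq_add_one_sub_sq_pos t).ne'

lemma sqrt_add_sqrt_one_sub_pos (s : ℝ) : 0 < √s + √(1 - s) := by
  rcases lt_or_ge 0 s with hs | hs
  · exact add_pos_of_pos_of_nonneg (Real.sqrt_pos.mpr hs) (Real.sqrt_nonneg _)
  · exact add_pos_of_nonneg_of_pos (Real.sqrt_nonneg _) (Real.sqrt_pos.mpr (by linarith))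

lemma continuous_ofSqResolvent : Continuous ofSqResolvent :=
  Continuous.div (by fun_prop) (by fun_prop) fun s => (sqrt_add_sqrt_one_sub_pos s).ne'

lemma ofSqResolvent_toSqResolvent {t : ℝ} (ht : t ∈ Set.Icc (0 : ℝ) 1) :
    ofSqResolvent (toSqResolvent t) = t := by
  obtain ⟨ht₀, ht₁⟩ := ht
  have hq := sq_add_one_sub_sq_pos t
  have h₁ : √(toSqResolvent t) = t / √(t ^ 2 + (1 - t) ^ 2) := by
    rw [toSqResolvent, Real.sqrt_div (sq_nonneg t), Real.sqrt_sq ht₀]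
  have h₂ : √(1 - toSqResolvent t) = (1 - t) / √(t ^ 2 + (1 - t) ^ 2) := by
    rw [show 1 - toSqResolvent t = (1 - t) ^ 2 / (t ^ 2 + (1 - t) ^ 2) by
        rw [toSqResolvent]; field_simp; ring,
      Real.sqrt_div (sq_nonneg _), Real.sqrt_sq (by linarith)]
  have : 0 < √(t ^ 2 + (1 - t) ^ 2) := Real.sqrt_pos.mpr hq
  rw [ofSqResolvent, h₁, h₂, ← add_div, add_sub_cancel]
  field_simp

lemma R_apply_mem_domain (y : H) : pd.R y ∈ pd.Hm.domain := (pd.resolvent_right y).1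

lemma Hm_R_apply (y : H) : pd.Hm ⟨pd.R y, pd.R_apply_mem_domain y⟩ = (1 - pd.R) y := by
  rw [sub_apply, one_apply_eq_self, eq_sub_iff_add_eq', (pd.resolvent_right y).2]

lemma Hm_congr {x y : H} (h : x = y) (hx : x ∈ pd.Hm.domain) (hy : y ∈ pd.Hm.domain) :
    pd.Hm ⟨x, hx⟩ = pd.Hm ⟨y, hy⟩ := by
  subst h; rfl

lemma inner_Hm_left (hdense : Dense (A.domain : Set H)) (x y : H) (hx : x ∈ pd.Hm.domain)
    (hy : y ∈ pd.Hm.domain) : ⟪pd.Hm ⟨x, hx⟩, y⟫_ℂ = ⟪x, pd.Hm ⟨y, hy⟩⟫_ℂ := by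
  have h := LinearPMap.adjoint_isFormalAdjoint (T := pd.Hm) (by rwa [pd.domain_eq])
  rw [pd.selfAdjoint] at h
  exact h ⟨x, hx⟩ ⟨y, hy⟩

lemma R_isSelfAdjoint (hdense : Dense (A.domain : Set H)) : IsSelfAdjoint pd.R := by
  refine ((eq_adjoint_iff pd.R pd.R).mpr fun u v => ?_).symm
  conv_lhs => rw [← (pd.resolvent_right v).2]
  conv_rhs => rw [← (pd.resolvent_right u).2]
  rw [inner_add_right, inner_add_left, pd.inner_Hm_left hdense]

lemma re_inner_add_Hm_nonneg (x : H) (hx : x ∈ pd.Hm.domain) :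
    0 ≤ RCLike.re ⟪x, x + pd.Hm ⟨x, hx⟩⟫_ℂ := by
  rw [inner_add_right, map_add, inner_re_symm x (pd.Hm ⟨x, hx⟩)]
  simpa only [RCLike.re_to_complex] using
    add_nonneg (inner_self_nonneg (𝕜 := ℂ) (x := x)) (pd.positive x hx)

lemma re_inner_Hm_add_Hm_nonneg (x : H) (hx : x ∈ pd.Hm.domain) :
    0 ≤ RCLike.re ⟪pd.Hm ⟨x, hx⟩, x + pd.Hm ⟨x, hx⟩⟫_ℂ := by
  rw [inner_add_right, map_add]
  simpa only [RCLike.re_to_complex] using add_nonneg (pd.positive x hx)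
    (inner_self_nonneg (𝕜 := ℂ) (x := pd.Hm ⟨x, hx⟩))

lemma R_nonneg (hdense : Dense (A.domain : Set H)) : 0 ≤ pd.R := by
  refine (nonneg_iff_isPositive _).mpr
    (isPositive_def'.mpr ⟨pd.R_isSelfAdjoint hdense, fun y => ?_⟩)
  have h := pd.re_inner_add_Hm_nonneg (pd.R y) (pd.R_apply_mem_domain y)
  rwa [(pd.resolvent_right y).2] at h

lemma R_le_one (hdense : Dense (A.domain : Set H)) : pd.R ≤ 1 := by
  refine (le_def _ _).mpr (isPositive_def'.mpr
    ⟨(IsSelfAdjoint.one _).sub (pd.R_isSelfAdjoint hdense), fun y => ?_⟩)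
  have h := pd.re_inner_Hm_add_Hm_nonneg (pd.R y) (pd.R_apply_mem_domain y)
  rwa [(pd.resolvent_right y).2, pd.Hm_R_apply] at h

lemma spectrum_R_subset_Icc (hdense : Dense (A.domain : Set H)) :
    spectrum ℝ pd.R ⊆ Set.Icc 0 1 := by
  have hle : ∀ t ∈ spectrum ℝ pd.R, t ≤ 1 := by
    rw [← le_algebraMap_iff_spectrum_le (pd.R_isSelfAdjoint hdense), map_one]
    exact pd.R_le_one hdense
  exact fun t ht => ⟨spectrum_nonneg_of_nonneg (pd.R_nonneg hdense) ht, hle t ht⟩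

/-- `(1 + |A|²)⁻¹`. -/
def sqResolvent : H →L[ℂ] H := cfc toSqResolvent pd.R

lemma sqResolvent_isSelfAdjoint : IsSelfAdjoint pd.sqResolvent := cfc_predicate _ _

lemma exists_sqResolvent_eq (hdense : Dense (A.domain : Set H)) :
    ∃ E : H →L[ℂ] H, pd.sqResolvent = pd.R * (pd.R * E) ∧
      pd.R * (pd.R * E) + (1 - pd.R) * ((1 - pd.R) * E) = 1 := by
  have hsa := pd.R_isSelfAdjoint hdense
  let w (t : ℝ) : ℝ := (t ^ 2 + (1 - t) ^ 2)⁻¹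
  have hw : Continuous w :=
    Continuous.inv₀ (by fun_prop) fun t => (sq_add_one_sub_sq_pos t).ne'
  have hR : cfc (fun t : ℝ => t) pd.R = pd.R := cfc_id' ℝ pd.R
  have h1R : cfc (fun t : ℝ => 1 - t) pd.R = 1 - pd.R := by
    rw [cfc_sub .., cfc_const_one ℝ pd.R, hR]
  have hmul (f : ℝ → ℝ) (hf : Continuous f) :
      cfc (fun t => f t * (f t * w t)) pd.R = cfc f pd.R * (cfc f pd.R * cfc w pd.R) := by
    rw [cfc_mul f _ pd.R, cfc_mul f w pd.R]
  have hS := hmul (fun t => t) continuous_id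
  have h1S := hmul (fun t => 1 - t) (by fun_prop)
  rw [hR] at hS
  rw [h1R] at h1S
  refine ⟨cfc w pd.R, ?_, ?_⟩
  · rw [← hS, sqResolvent]
    refine cfc_congr fun t _ => ?_
    simp only [toSqResolvent, w]
    field_simp
  · rw [← hS, ← h1S, ← cfc_add (a := pd.R) _ _ (by fun_prop) (by fun_prop),
      ← cfc_one ℝ pd.R]
    refine cfc_congr fun t _ => ?_
    have := (sq_add_one_sub_sq_pos t).ne'
    simp only [w, Pi.one_apply]
    field_simp

lemma sqResolvent_spec (hdense : Dense (A.domain : Set H)) (y : H) :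
    ∃ (h₁ : pd.sqResolvent y ∈ pd.Hm.domain)
      (h₂ : pd.Hm ⟨pd.sqResolvent y, h₁⟩ ∈ pd.Hm.domain),
      pd.sqResolvent y + pd.Hm ⟨pd.Hm ⟨pd.sqResolvent y, h₁⟩, h₂⟩ = y := by
  obtain ⟨E, hS, hsum⟩ := pd.exists_sqResolvent_eq hdense
  have hSy : pd.sqResolvent y = pd.R (pd.R (E y)) := by rw [hS]; rfl
  have h₁ : pd.sqResolvent y ∈ pd.Hm.domain := hSy ▸ pd.R_apply_mem_domain _
  have hHmSy : pd.Hm ⟨pd.sqResolvent y, h₁⟩ = pd.R ((1 - pd.R) (E y)) := by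
    rw [pd.Hm_congr hSy _ (pd.R_apply_mem_domain _), pd.Hm_R_apply]
    simp only [sub_apply, one_apply_eq_self, map_sub]
  have h₂ : pd.Hm ⟨pd.sqResolvent y, h₁⟩ ∈ pd.Hm.domain := hHmSy ▸ pd.R_apply_mem_domain _
  refine ⟨h₁, h₂, ?_⟩
  rw [pd.Hm_congr hHmSy _ (pd.R_apply_mem_domain _), pd.Hm_R_apply, hSy]
  exact DFunLike.congr_fun hsum y

lemma inner_Hm_Hm (x y : H) (hx : x ∈ pd.Hm.domain) (hy : y ∈ pd.Hm.domain)
    (hx' : x ∈ A.domain) (hy' : y ∈ A.domain) :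
    ⟪pd.Hm ⟨x, hx⟩, pd.Hm ⟨y, hy⟩⟫_ℂ = ⟪A ⟨x, hx'⟩, A ⟨y, hy'⟩⟫_ℂ := by
  rw [pd.factor x hx hx', pd.factor y hy hy', ← adjoint_inner_right, pd.initial]

lemma apply_mem_domain {B : H →L[ℂ] H} (hB : B.CommutesWithPMap A) {x : H}
    (hx : x ∈ pd.Hm.domain) : B x ∈ pd.Hm.domain :=
  pd.domain_eq ▸ (hB x (pd.domain_eq ▸ hx)).1

variable {B : H →L[ℂ] H}

lemma inner_Hm_map_Hm (hB : B.CommutesWithPMap A) (hB' : (adjoint B).CommutesWithPMap A)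
    (x y : H) (hx : x ∈ pd.Hm.domain) (hy : y ∈ pd.Hm.domain) :
    ⟪pd.Hm ⟨B x, pd.apply_mem_domain hB hx⟩, pd.Hm ⟨y, hy⟩⟫_ℂ =
      ⟪pd.Hm ⟨x, hx⟩, pd.Hm ⟨adjoint B y, pd.apply_mem_domain hB' hy⟩⟫_ℂ := by
  obtain ⟨hBx, hBAx⟩ := hB x (pd.domain_eq ▸ hx)
  obtain ⟨hBy, hBAy⟩ := hB' y (pd.domain_eq ▸ hy)
  rw [pd.inner_Hm_Hm _ _ _ _ hBx (pd.domain_eq ▸ hy),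
    pd.inner_Hm_Hm _ _ _ _ (pd.domain_eq ▸ hx) hBy, ← hBAx, ← hBAy, adjoint_inner_right]

lemma commute_sqResolvent (hdense : Dense (A.domain : Set H)) (hB : B.CommutesWithPMap A)
    (hB' : (adjoint B).CommutesWithPMap A) : Commute B pd.sqResolvent := by
  set S := pd.sqResolvent
  ext u
  refine ext_inner_right ℂ fun v => ?_
  obtain ⟨hu₁, hu₂, hu⟩ := pd.sqResolvent_spec hdense u
  obtain ⟨hv₁, hv₂, hv⟩ := pd.sqResolvent_spec hdense v
  calc ⟪B (S u), v⟫_ℂ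
      = ⟪B (S u), S v⟫_ℂ + ⟪B (S u), pd.Hm ⟨pd.Hm ⟨S v, hv₁⟩, hv₂⟩⟫_ℂ := by
        rw [← inner_add_right, hv]
    _ = ⟪S u, adjoint B (S v)⟫_ℂ +
          ⟪pd.Hm ⟨B (S u), pd.apply_mem_domain hB hu₁⟩, pd.Hm ⟨S v, hv₁⟩⟫_ℂ := by
        rw [adjoint_inner_right, pd.inner_Hm_left hdense]
    _ = ⟪S u, adjoint B (S v)⟫_ℂ +
          ⟪pd.Hm ⟨S u, hu₁⟩, pd.Hm ⟨adjoint B (S v), pd.apply_mem_domain hB' hv₁⟩⟫_ℂ := by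
        rw [pd.inner_Hm_map_Hm hB hB']
    _ = ⟪S u + pd.Hm ⟨pd.Hm ⟨S u, hu₁⟩, hu₂⟩, adjoint B (S v)⟫_ℂ := by
        rw [inner_add_left, pd.inner_Hm_left hdense _ _ hu₂ (pd.apply_mem_domain hB' hv₁)]
    _ = ⟪S (B u), v⟫_ℂ := by
        rw [hu, adjoint_inner_right, ← adjoint_inner_left,
          pd.sqResolvent_isSelfAdjoint.adjoint_eq]

lemma commute_R (hdense : Dense (A.domain : Set H)) (hB : B.CommutesWithPMap A)
    (hB' : (adjoint B).CommutesWithPMap A) : Commute B pd.R := by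
  have hR : pd.R = cfc ofSqResolvent pd.sqResolvent := calc
    pd.R = cfc (fun t : ℝ => t) pd.R := (cfc_id' ℝ pd.R (pd.R_isSelfAdjoint hdense)).symm
    _ = cfc (fun t => ofSqResolvent (toSqResolvent t)) pd.R := cfc_congr fun t ht =>
      (ofSqResolvent_toSqResolvent (pd.spectrum_R_subset_Icc hdense ht)).symm
    _ = cfc ofSqResolvent pd.sqResolvent := cfc_comp' _ _ pd.R
      continuous_ofSqResolvent.continuousOn continuous_toSqResolvent.continuousOn
      (pd.R_isSelfAdjoint hdense)
  rw [hR]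
  exact ((pd.commute_sqResolvent hdense hB hB').symm.cfc_real _).symm

lemma commutesWithPMap_Hm_of_commute (hc : Commute B pd.R) : B.CommutesWithPMap pd.Hm := by
  intro x hx
  have hBx : B x = pd.R (B (x + pd.Hm ⟨x, hx⟩)) := by
    rw [← mul_apply_eq_comp, ← hc.eq, mul_apply_eq_comp, pd.resolvent_left]
  refine ⟨hBx ▸ pd.R_apply_mem_domain _, ?_⟩
  rw [pd.Hm_congr hBx _ (pd.R_apply_mem_domain _), pd.Hm_R_apply, sub_apply, one_apply_eq_self,
    ← hBx, map_add, add_sub_cancel_left]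

lemma commute_U (hB : B.CommutesWithPMap A) (hHm : B.CommutesWithPMap pd.Hm)
    (hHm' : (adjoint B).CommutesWithPMap pd.Hm) : Commute B pd.U := by
  set M := LinearMap.range pd.Hm.toFun
  have hU : ∀ y ∈ Mᗮ, pd.U y = 0 := fun y hy =>
    pd.kernel y fun x hx => (Submodule.mem_orthogonal' M y).mp hy _ ⟨⟨x, hx⟩, rfl⟩
  have hBM : ∀ y ∈ Mᗮ, B y ∈ Mᗮ := by
    intro y hy
    rw [Submodule.mem_orthogonal']
    rintro _ ⟨⟨x, hx⟩, rfl⟩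
    obtain ⟨hx', h⟩ := hHm' x hx
    rw [LinearPMap.toFun_eq_coe, ← adjoint_inner_right, h]
    exact (Submodule.mem_orthogonal' M y).mp hy _ ⟨⟨_, hx'⟩, rfl⟩
  rw [commute_iff_eq, ← sub_eq_zero]
  refine eq_zero_of_orthogonal_decomposition (K := M) _ ?_ fun y hy => ?_
  · rintro _ ⟨⟨x, hx⟩, rfl⟩
    obtain ⟨hBx, hBA⟩ := hB x (pd.domain_eq ▸ hx)
    obtain ⟨hBx', hBHm⟩ := hHm x hx
    rw [sub_apply, mul_apply_eq_comp, mul_apply_eq_comp, LinearPMap.toFun_eq_coe,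
      ← pd.factor x hx (pd.domain_eq ▸ hx), hBA, pd.factor _ hBx' hBx, hBHm, sub_self]
  · rw [sub_apply, mul_apply_eq_comp, mul_apply_eq_comp, hU y hy, hU _ (hBM y hy), map_zero,
      sub_self]

end PolarData

theorem statement1_general (A : H →ₗ.[ℂ] H)
    (hdense : Dense (A.domain : Set H))
    (B : H →L[ℂ] H)
    (hBA : ∀ (ξ : H) (hξ : ξ ∈ A.domain),
      ∃ h : B ξ ∈ A.domain, B (A ⟨ξ, hξ⟩) = A ⟨B ξ, h⟩)
    (hBstarA : ∀ (ξ : H) (hξ : ξ ∈ A.domain),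
      ∃ h : (adjoint B) ξ ∈ A.domain, (adjoint B) (A ⟨ξ, hξ⟩) = A ⟨(adjoint B) ξ, h⟩)
    (pd : PolarData A) :
    Commute B pd.U ∧ Commute B pd.R := by
  have hR := pd.commute_R hdense hBA hBstarA
  have hR' := pd.commute_R hdense hBstarA ((adjoint_adjoint B).symm ▸ hBA)
  exact ⟨pd.commute_U hBA (pd.commutesWithPMap_Hm_of_commute hR)
    (pd.commutesWithPMap_Hm_of_commute hR'), hR⟩

/-- If `A` is a closed densely defined operator and `B` is a bounded operator with
`B A ⊆ A B` and `B* A ⊆ A B*`, then `B` commutes with the partial isometry `U` and with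
the bounded operator `(1 + |A|)⁻¹` coming from the polar decomposition `A = U|A|`. -/
theorem statement1 (A : H →ₗ.[ℂ] H)
    (hdense : Dense (A.domain : Set H)) (hclosed : A.IsClosed)
    (B : H →L[ℂ] H)
    (hBA : ∀ (ξ : H) (hξ : ξ ∈ A.domain),
      ∃ h : B ξ ∈ A.domain, B (A ⟨ξ, hξ⟩) = A ⟨B ξ, h⟩)
    (hBstarA : ∀ (ξ : H) (hξ : ξ ∈ A.domain),
      ∃ h : (adjoint B) ξ ∈ A.domain, (adjoint B) (A ⟨ξ, hξ⟩) = A ⟨(adjoint B) ξ, h⟩)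
    (pd : PolarData A) :
    Commute B pd.U ∧ Commute B pd.R :=
  statement1_general A hdense B hBA hBstarA pd
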